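/- For any linear order L, d(L) = sup{d(L') | L' is a suborder of L possessing a maximum and a minimum element}, the supremum being taken in the linearly ordered class {−1} ∪ Ordinals ∪ {∞}. -/

import Mathlib

universe u v

attribute [local instance] Classical.propDecidable

noncomputable section

namespace PaperHam

/-- The `i`-th projection of a set of tuples. -/
def proj {n : ℕ} {L : Fin n → Type u} (i : Fin n) (S : Set (∀ i, L i)) : Set (L i) :=
  (fun x => x i) '' S

/-- The set of strict lower bounds of `A` within the ambient carrier `K`. -/
def lowerStrictIn {α : Type u} [LT α] (K A : Set α) : Set α := {b ∈ K | ∀ a ∈ A, b < a}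

/-- The set of strict upper bounds of `A` within the ambient carrier `K`. -/
def upperStrictIn {α : Type u} [LT α] (K A : Set α) : Set α := {b ∈ K | ∀ a ∈ A, a < b}

/-- A sub-`n`-clat: a set of tuples coinciding with the product of its projections. -/
def IsSubClat {n : ℕ} {L : Fin n → Type u} (S : Set (∀ i, L i)) : Prop :=
  S = Set.pi Set.univ fun i => proj i S

/-- `H` is an abstract `n`-hammock in the `n`-clat `∏ K i`. -/
def IsHammockIn {n : ℕ} {L : Fin n → Type u} [∀ i, LinearOrder (L i)]
    (K : ∀ i, Set (L i)) (H : Set (∀ i, L i)) : Prop :=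
  ∃ (k : ℕ) (S : Fin (k + 1) → Set (∀ i, L i)),
    (∀ j, IsSubClat (S j)) ∧
    H = ⋃ j, S j ∧
    (∀ i, proj i H = K i) ∧
    (∀ i, (proj i (S 0) ∩ proj i (S (Fin.last k))).Nonempty) ∧
    ∀ (j : Fin k) (i : Fin n),
      lowerStrictIn (K i) (proj i (S j.castSucc)) ∩ proj i (S j.succ) = ∅ ∧
      upperStrictIn (K i) (proj i (S j.castSucc)) ∩
        lowerStrictIn (K i) (proj i (S j.succ)) = ∅ ∧
      proj i (S j.castSucc) ∩ upperStrictIn (K i) (proj i (S j.succ)) = ∅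

/-- `H` is an abstract `n`-hammock in the full `n`-clat `∏ i, L i`. -/
def IsHammock {n : ℕ} {L : Fin n → Type u} [∀ i, LinearOrder (L i)]
    (H : Set (∀ i, L i)) : Prop :=
  IsHammockIn (fun _ => Set.univ) H

/-- A subset of a (pre)ordered type is scattered if it contains no copy of `ℚ`. -/
def IsScatteredSet {α : Type*} [Preorder α] (A : Set α) : Prop :=
  ¬ ∃ f : ℚ → α, StrictMono f ∧ ∀ q, f q ∈ A

/-- An order is scattered if `ℚ` does not order-embed into it. -/
def IsScatteredOrder (α : Type*) [Preorder α] : Prop :=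
  ¬ ∃ f : ℚ → α, StrictMono f

/-- A box in a hammock `H`. -/
def IsBox {n : ℕ} {L : Fin n → Type u} [∀ i, LinearOrder (L i)]
    (H X : Set (∀ i, L i)) : Prop :=
  (∀ i, (proj i X).OrdConnected) ∧ X = H ∩ Set.pi Set.univ fun i => proj i X

/-- A maximal scattered box in `H`. -/
def IsMSB {n : ℕ} {L : Fin n → Type u} [∀ i, LinearOrder (L i)]
    (H X : Set (∀ i, L i)) : Prop :=
  IsBox H X ∧ IsScatteredSet X ∧ ∀ Y, IsBox H Y → IsScatteredSet Y → X ⊆ Y → Y = X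

/-- The scattered condensation class of `x` in the hammock `H`. -/
def condClass {n : ℕ} {L : Fin n → Type u} [∀ i, LinearOrder (L i)]
    (H : Set (∀ i, L i)) (x : ∀ i, L i) : Set (∀ i, L i) :=
  {y ∈ H | IsScatteredSet (H ∩ Set.uIcc x y)}

/-- The scattered condensation class of `x` in a linear order. -/
def condClassLin {α : Type*} [LinearOrder α] (x : α) : Set α :=
  {y | IsScatteredSet (Set.uIcc x y)}

/-- The Hausdorff condensation relation `∼_o` on a linear order. -/
def hrEquiv {α : Type u} [LinearOrder α] (o : Ordinal.{v}) : α → α → Prop :=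
  Ordinal.limitRecOn (motive := fun _ => α → α → Prop) o (fun x y => x = y)
    (fun _ R x y => {s : Set α | ∃ z ∈ Set.uIcc x y, s = {w ∈ Set.uIcc x y | R z w}}.Finite)
    (fun o _ ih x y => ∃ β, ∃ hβ : β < o, ih β hβ x y)

/-- The set of `∼_o`-classes of the linear order `α`. -/
def hrClasses (α : Type u) [LinearOrder α] (o : Ordinal.{u}) : Set (Set α) :=
  {s | ∃ z : α, s = {w | hrEquiv o z w}}

/-- The Hausdorff rank of a linear order: the least ordinal `o` with `α/∼_o` finite,
`⊤ = ∞` if there is none. -/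
def HRrank (α : Type u) [LinearOrder α] : WithTop Ordinal.{u} :=
  if _ : ∃ o : Ordinal.{u}, (hrClasses α o).Finite then
    ((sInf {o : Ordinal.{u} | (hrClasses α o).Finite} : Ordinal.{u}) : WithTop Ordinal.{u})
  else ⊤

/-- The density of a linear order, valued in `{-1} ∪ Ordinal ∪ {∞}`,
encoded as `WithBot (WithTop Ordinal)` (with `⊥ = -1` and `⊤ = ∞`). -/
def density (α : Type u) [LinearOrder α] : WithBot (WithTop Ordinal.{u}) :=
  if _ : ∃ o : Ordinal.{u}, (hrClasses α o).Finite then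
    if Nonempty α then
      (((Ordinal.omega0.{u} * sInf {o : Ordinal.{u} | (hrClasses α o).Finite} +
          (((hrClasses α (sInf {o : Ordinal.{u} | (hrClasses α o).Finite})).ncard - 1 : ℕ) :
            Ordinal.{u}) : Ordinal.{u}) : WithTop Ordinal.{u}) : WithBot (WithTop Ordinal.{u}))
    else ⊥
  else ((⊤ : WithTop Ordinal.{u}) : WithBot (WithTop Ordinal.{u}))

/-- The Hausdorff rank attached to a density value: `∞` if the density is `∞`, and
otherwise the unique ordinal `a` such that the density is `ω·a + p` with `p < ω`. -/
def rankOfDensity (d : WithBot (WithTop Ordinal.{u})) : WithTop Ordinal.{u} :=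
  if h : ∃ o : Ordinal.{u}, d = ((o : WithTop Ordinal.{u}) : WithBot (WithTop Ordinal.{u})) then
    ((h.choose / Ordinal.omega0.{u} : Ordinal.{u}) : WithTop Ordinal.{u})
  else ⊤

/-- A chain in a partial order is linearly ordered. -/
def chainLinearOrder {P : Type u} [PartialOrder P] {A : Set P}
    (h : IsChain (· ≤ ·) A) : LinearOrder ↥A :=
  { (inferInstance : PartialOrder ↥A) with
    le_total := fun a b => by
      rcases eq_or_ne (a : P) (b : P) with hab | hab
      · exact Or.inl (le_of_eq (Subtype.ext hab))
      · exact (h a.2 b.2 hab).imp Subtype.coe_le_coe.mp Subtype.coe_le_coe.mp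
    toDecidableLE := Classical.decRel _ }

/-- The density of a chain in a partial order. -/
def chainDensity {P : Type u} [PartialOrder P] (A : Set P) (h : IsChain (· ≤ ·) A) :
    WithBot (WithTop Ordinal.{u}) :=
  @density ↥A (chainLinearOrder h)

/-- The density of a subset of a partial order: the supremum of the densities of its
chains having a maximum and a minimum. -/
def posetDensitySet {P : Type u} [PartialOrder P] (X : Set P) :
    WithBot (WithTop Ordinal.{u}) :=
  sSup {d | ∃ (A : Set P) (h : IsChain (· ≤ ·) A), A ⊆ X ∧
    (∃ m ∈ A, ∀ a ∈ A, a ≤ m) ∧ (∃ m ∈ A, ∀ a ∈ A, m ≤ a) ∧ d = chainDensity A h}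

/-- A linear order is discrete if every non-maximal element has an immediate successor and
every non-minimal element has an immediate predecessor. -/
def IsDiscreteOrder (α : Type*) [LinearOrder α] : Prop :=
  (∀ x : α, (∃ y, x < y) → ∃ y, x ⋖ y) ∧ ∀ x : α, (∃ y, y < x) → ∃ y, y ⋖ x

/-- `A` is an initial segment (prefix) of `B`. -/
def IsLowerWithin {α : Type*} [Preorder α] (A B : Set α) : Prop :=
  A ⊆ B ∧ ∀ a ∈ A, ∀ b ∈ B, b ≤ a → b ∈ A

/-- `A` is a final segment (suffix) of `B`. -/
def IsUpperWithin {α : Type*} [Preorder α] (A B : Set α) : Prop :=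
  A ⊆ B ∧ ∀ a ∈ A, ∀ b ∈ B, a ≤ b → b ∈ A

/-- A bottom corner of the hammock `H`: a box of `H` which is an `n`-clat such that each
projection is a prefix of the corresponding projection of `H` order-isomorphic to
`L' · ω*` (i.e. `Lex (ℕᵒᵈ × L')`) for some linear order `L'`. -/
def IsBottomCorner {n : ℕ} {L : Fin n → Type u} [∀ i, LinearOrder (L i)]
    (H F : Set (∀ i, L i)) : Prop :=
  IsBox H F ∧ IsSubClat F ∧
    ∀ i, IsLowerWithin (proj i F) (proj i H) ∧
      ∃ (β : Type u) (_ : LinearOrder β), Nonempty (↥(proj i F) ≃o Lex (ℕᵒᵈ × β))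

/-- A top corner of the hammock `H`: a box of `H` which is an `n`-clat such that each
projection is a suffix of the corresponding projection of `H` order-isomorphic to
`L' · ω` (i.e. `Lex (ℕ × L')`) for some linear order `L'`. -/
def IsTopCorner {n : ℕ} {L : Fin n → Type u} [∀ i, LinearOrder (L i)]
    (H F : Set (∀ i, L i)) : Prop :=
  IsBox H F ∧ IsSubClat F ∧
    ∀ i, IsUpperWithin (proj i F) (proj i H) ∧
      ∃ (β : Type u) (_ : LinearOrder β), Nonempty (↥(proj i F) ≃o Lex (ℕ × β))

/-- `W` is the dot sum `A ∔ B ∔ C` of the three subsets `A`, `B`, `C` of a linear order: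
the union is `W`, the maximum of `A` is the minimum of `B`, and the maximum of `B` is the
minimum of `C`. -/
def TripleDotSumEq {α : Type*} [LinearOrder α] (A B C W : Set α) : Prop :=
  W = A ∪ B ∪ C ∧ (∃ x, IsGreatest A x ∧ IsLeast B x) ∧ ∃ y, IsGreatest B y ∧ IsLeast C y

/-- A corner decomposition `(F₋, H₀, F₊)` of the hammock `H`. -/
def IsCornerDecomp {n : ℕ} {L : Fin n → Type u} [∀ i, LinearOrder (L i)]
    (H Fm H0 Fp : Set (∀ i, L i)) : Prop :=
  IsBottomCorner H Fm ∧ IsTopCorner H Fp ∧ H0 ⊆ H ∧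
    IsHammockIn (fun i => proj i H0) H0 ∧
    (∀ i, (∃ m, IsGreatest (proj i H0) m) ∧ ∃ m, IsLeast (proj i H0) m) ∧
    ∀ i, TripleDotSumEq (proj i Fm) (proj i H0) (proj i Fp) (proj i H)

/-- The carrier of the `n`-fold dot sum `L 0 ∔ L 1 ∔ ⋯ ∔ L (n-1)` inside the lexicographic
sigma type: one removes the minimum of `L i` whenever the dot sum of the preceding
components has a maximum (these two points being identified). -/
def dotSumCarrier {n : ℕ} (L : Fin n → Type u) [∀ i, LinearOrder (L i)] :
    Set (Lex (Σ i, L i)) :=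
  {x | ¬ ((∀ b : L (ofLex x).1, (ofLex x).2 ≤ b) ∧
      ∃ j < (ofLex x).1, (∃ m : L j, ∀ b : L j, b ≤ m) ∧
        ∀ k : Fin n, j < k → k < (ofLex x).1 → IsEmpty (L k))}

/-- The carrier of the binary dot sum `α ∔ β` inside `Lex (α ⊕ β)`: the minimum of `β` is
removed (being identified with the maximum of `α`) whenever both exist. -/
def dotCarrier (α β : Type u) [LinearOrder α] [LinearOrder β] : Set (Lex (α ⊕ β)) :=
  {x | ¬ ((∃ m : α, ∀ a : α, a ≤ m) ∧
      ∃ b : β, (∀ b' : β, b ≤ b') ∧ x = toLex (Sum.inr b))}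

/-- The binary dot sum `α ∔ β` of two linear orders. -/
abbrev DotSum (α β : Type u) [LinearOrder α] [LinearOrder β] : Type u := ↥(dotCarrier α β)

/-- The class `LO_fp` of finitely presented linear orders: the smallest class of linear
orders containing the empty and one-element orders, closed under order isomorphism and
under the operations `L ↦ ω·L`, `L ↦ ω*·L` and `(L₁, L₂) ↦ L₁ + L₂`. -/
inductive IsFinPresLO : ∀ (α : Type u), LinearOrder α → Prop
  | subsingleton (α : Type u) [inst : LinearOrder α] (h : Subsingleton α) :
      IsFinPresLO α inst
  | omegaMul (α : Type u) [inst : LinearOrder α] (h : IsFinPresLO α inst) :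
      IsFinPresLO (Lex (α × ℕ)) inferInstance
  | omegaStarMul (α : Type u) [inst : LinearOrder α] (h : IsFinPresLO α inst) :
      IsFinPresLO (Lex (α × ℕᵒᵈ)) inferInstance
  | sum (α β : Type u) [instα : LinearOrder α] [instβ : LinearOrder β]
      (hα : IsFinPresLO α instα) (hβ : IsFinPresLO β instβ) :
      IsFinPresLO (Lex (α ⊕ β)) inferInstance
  | iso (α β : Type u) [instα : LinearOrder α] [instβ : LinearOrder β]
      (hα : IsFinPresLO α instα) (e : α ≃o β) : IsFinPresLO β instβ




section Aux10

variable {α : Type u} [LinearOrder α]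

/-- The set of `R`-classes on `S`. -/
def classesOn (R : α → α → Prop) (S : Set α) : Set (Set α) :=
  {s | ∃ z ∈ S, s = {w ∈ S | R z w}}

theorem hrEquiv_zero (x y : α) : hrEquiv (0 : Ordinal.{v}) x y ↔ x = y := by
  rw [hrEquiv, Ordinal.limitRecOn_zero]

theorem hrEquiv_succ (o : Ordinal.{v}) (x y : α) :
    hrEquiv (o + 1) x y ↔ (classesOn (hrEquiv o) (Set.uIcc x y)).Finite := by
  rw [hrEquiv, Ordinal.add_one_eq_succ, Ordinal.limitRecOn_succ]
  rfl

theorem hrEquiv_limit {o : Ordinal.{v}} (ho : Order.IsSuccLimit o) (x y : α) :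
    hrEquiv o x y ↔ ∃ β < o, hrEquiv β x y := by
  rw [hrEquiv, Ordinal.limitRecOn_limit (h := ho)]
  constructor
  · rintro ⟨β, hβ, h⟩; exact ⟨β, hβ, h⟩
  · rintro ⟨β, hβ, h⟩; exact ⟨β, hβ, h⟩

end Aux10
set_option linter.unusedSectionVars false

section Aux10b

variable {α : Type u} [LinearOrder α] {R R' : α → α → Prop} {S T S1 S2 : Set α}

theorem classesOn_finite_of_subset (hTS : T ⊆ S) (h : (classesOn R S).Finite) :
    (classesOn R T).Finite := by
  refine (h.image (fun s => s ∩ T)).subset ?_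
  rintro s ⟨z, hzT, rfl⟩
  refine ⟨{w ∈ S | R z w}, ⟨z, hTS hzT, rfl⟩, ?_⟩
  ext w
  have := @hTS w
  simp only [Set.mem_setOf_eq, Set.mem_inter_iff]
  tauto

theorem classesOn_finite_union (hR : Equivalence R) (h1 : (classesOn R S1).Finite)
    (h2 : (classesOn R S2).Finite) : (classesOn R (S1 ∪ S2)).Finite := by
  have key : ∀ (U : Set α), ∀ z : α,
      {w ∈ U | R z w} ∈ classesOn R U ∪ {∅} := by
    intro U z
    rcases Set.eq_empty_or_nonempty {w ∈ U | R z w} with he | ⟨w0, hw0⟩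
    · exact Or.inr (by simp [he])
    · refine Or.inl ⟨w0, hw0.1, ?_⟩
      ext w
      simp only [Set.mem_setOf_eq]
      exact ⟨fun h => ⟨h.1, hR.trans (hR.symm hw0.2) h.2⟩,
        fun h => ⟨h.1, hR.trans hw0.2 h.2⟩⟩
  refine (((h1.union (Set.finite_singleton ∅)).prod
      (h2.union (Set.finite_singleton ∅))).image (fun p => p.1 ∪ p.2)).subset ?_
  rintro s ⟨z, hz, rfl⟩
  refine ⟨({w ∈ S1 | R z w}, {w ∈ S2 | R z w}), ⟨key S1 z, key S2 z⟩, ?_⟩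
  ext w
  simp only [Set.mem_setOf_eq, Set.mem_union]
  tauto

theorem classesOn_finite_coarsen (hR : Equivalence R) (hR' : Equivalence R')
    (hle : ∀ x y, R x y → R' x y) (h : (classesOn R S).Finite) :
    (classesOn R' S).Finite := by
  refine (h.image (fun s => {w ∈ S | ∃ v ∈ s, R' v w})).subset ?_
  rintro s ⟨z, hz, rfl⟩
  refine ⟨{w ∈ S | R z w}, ⟨z, hz, rfl⟩, ?_⟩
  ext w
  simp only [Set.mem_setOf_eq]
  constructor
  · rintro ⟨hw, v, ⟨_, hzv⟩, hvw⟩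
    exact ⟨hw, hR'.trans (hle _ _ hzv) hvw⟩
  · rintro ⟨hw, hzw⟩
    exact ⟨hw, z, ⟨hz, hR.refl z⟩, hzw⟩

theorem classesOn_finite_of_finite (hS : S.Finite) : (classesOn R S).Finite := by
  refine hS.finite_subsets.subset ?_
  rintro s ⟨z, hz, rfl⟩
  exact fun w hw => hw.1

end Aux10b
section Aux10c

variable {α : Type u} [LinearOrder α]

theorem hrEquiv_equiv_and_mono (o : Ordinal.{v}) :
    Equivalence (hrEquiv (α := α) o) ∧
      ∀ β < o, ∀ x y : α, hrEquiv β x y → hrEquiv o x y := by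
  induction o using Ordinal.induction with
  | _ o IH =>
  rcases Ordinal.zero_or_succ_or_isSuccLimit o with rfl | ⟨β, rfl⟩ | ho
  · refine ⟨⟨fun x => (hrEquiv_zero x x).2 rfl, ?_, ?_⟩, ?_⟩
    · intro x y h; rw [hrEquiv_zero] at h ⊢; exact h.symm
    · intro x y z h1 h2; rw [hrEquiv_zero] at h1 h2 ⊢; exact h1.trans h2
    · intro β hβ; exact absurd hβ (not_lt_zero (a := β))
  · -- successor case
    rw [← Ordinal.add_one_eq_succ] at *
    have hβeq : Equivalence (hrEquiv (α := α) β) := (IH β (lt_add_one β)).1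
    have hequiv : Equivalence (hrEquiv (α := α) (β + 1)) := by
      constructor
      · intro x
        rw [hrEquiv_succ, Set.uIcc_self]
        exact classesOn_finite_of_finite (Set.finite_singleton x)
      · intro x y h
        rw [hrEquiv_succ] at *
        rwa [Set.uIcc_comm]
      · intro x y z h1 h2
        rw [hrEquiv_succ] at *
        exact classesOn_finite_of_subset Set.uIcc_subset_uIcc_union_uIcc
          (classesOn_finite_union hβeq h1 h2)
    refine ⟨hequiv, ?_⟩
    have hstep : ∀ x y : α, hrEquiv β x y → hrEquiv (β + 1) x y := by
      intro x y h
      rw [hrEquiv_succ]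
      rcases Ordinal.zero_or_succ_or_isSuccLimit β with rfl | ⟨δ, rfl⟩ | hβ
      · rw [hrEquiv_zero] at h
        subst h
        rw [Set.uIcc_self]
        exact classesOn_finite_of_finite (Set.finite_singleton x)
      · rw [← Ordinal.add_one_eq_succ] at *
        rw [hrEquiv_succ] at h
        exact classesOn_finite_coarsen (IH δ (by
          calc δ < δ + 1 := lt_add_one δ
          _ < δ + 1 + 1 := lt_add_one _)).1 hβeq
          (fun x y h => (IH (δ + 1) (lt_add_one _)).2 δ (lt_add_one δ) x y h) h
      · rw [hrEquiv_limit hβ] at h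
        obtain ⟨δ, hδ, h⟩ := h
        have hδ1 : δ + 1 < β + 1 := by
          have := hβ.succ_lt hδ
          rw [Ordinal.add_one_eq_succ] at *
          simpa using this.trans (lt_add_one β)
        have h1 : hrEquiv (δ + 1) x y := (IH (δ + 1) hδ1).2 δ (lt_add_one δ) x y h
        rw [hrEquiv_succ] at h1
        refine classesOn_finite_coarsen (IH δ ((lt_add_one δ).trans hδ1)).1 hβeq
          (fun x y h => (hrEquiv_limit hβ x y).2 ⟨δ, hδ, h⟩) h1
    intro γ hγ x y h
    have hγβ : γ ≤ β := by
      rw [Ordinal.add_one_eq_succ, Order.lt_succ_iff] at hγ; exact hγ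
    rcases lt_or_eq_of_le hγβ with hlt | rfl
    · exact hstep x y ((IH β (lt_add_one β)).2 γ hlt x y h)
    · exact hstep x y h
  · -- limit case
    have hmono : ∀ β < o, ∀ x y : α, hrEquiv β x y → hrEquiv o x y := by
      intro β hβ x y h
      exact (hrEquiv_limit ho x y).2 ⟨β, hβ, h⟩
    refine ⟨⟨?_, ?_, ?_⟩, hmono⟩
    · intro x
      exact hmono 0 ho.pos x x ((hrEquiv_zero x x).2 rfl)
    · intro x y h
      rw [hrEquiv_limit ho] at h ⊢
      obtain ⟨β, hβ, h⟩ := h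
      exact ⟨β, hβ, (IH β hβ).1.symm h⟩
    · intro x y z h1 h2
      rw [hrEquiv_limit ho] at h1 h2
      obtain ⟨β, hβ, h1⟩ := h1
      obtain ⟨γ, hγ, h2⟩ := h2
      have hδ : max β γ < o := max_lt hβ hγ
      have l1 : hrEquiv (max β γ) x y := by
        rcases lt_or_eq_of_le (le_max_left β γ) with h | h
        · exact (IH _ hδ).2 β h x y h1
        · rwa [← h]
      have l2 : hrEquiv (max β γ) y z := by
        rcases lt_or_eq_of_le (le_max_right β γ) with h | h
        · exact (IH _ hδ).2 γ h y z h2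
        · rwa [← h]
      exact hmono _ hδ x z ((IH _ hδ).1.trans l1 l2)

theorem hrEquiv_equivalence (o : Ordinal.{v}) : Equivalence (hrEquiv (α := α) o) :=
  (hrEquiv_equiv_and_mono o).1

theorem hrEquiv_mono {β o : Ordinal.{v}} (h : β ≤ o) {x y : α}
    (hxy : hrEquiv β x y) : hrEquiv o x y := by
  rcases lt_or_eq_of_le h with h | rfl
  · exact (hrEquiv_equiv_and_mono o).2 β h x y hxy
  · exact hxy

end Aux10c
section Aux10d

variable {α : Type u} [LinearOrder α]

theorem mem_uIcc_subtype {A : Set α} {x y w : A} :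
    w ∈ Set.uIcc x y ↔ (w : α) ∈ Set.uIcc (x : α) (y : α) := by
  simp only [Set.mem_uIcc, ← Subtype.coe_le_coe]

/-- Transfer of the Hausdorff relation from the ambient order to a suborder. -/
theorem hrEquiv_of_val {A : Set α} (o : Ordinal.{v}) (x y : A)
    (h : hrEquiv o (x : α) (y : α)) : hrEquiv o x y := by
  induction o using Ordinal.limitRecOn generalizing x y with
  | zero =>
    rw [hrEquiv_zero] at h ⊢
    exact Subtype.ext h
  | add_one o IH =>
    rw [hrEquiv_succ] at h ⊢
    have hres : Equivalence (fun u v : A => hrEquiv o (u : α) (v : α)) := by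
      obtain ⟨r, s, t⟩ := hrEquiv_equivalence (α := α) o
      exact ⟨fun u => r _, fun h => s h, fun h1 h2 => t h1 h2⟩
    have step1 : (classesOn (fun u v : A => hrEquiv o (u : α) (v : α))
        (Set.uIcc x y)).Finite := by
      refine (h.image (fun s => (Subtype.val ⁻¹' s) ∩ Set.uIcc x y)).subset ?_
      rintro s ⟨z, hz, rfl⟩
      refine ⟨{w ∈ Set.uIcc (x : α) (y : α) | hrEquiv o (z : α) w},
        ⟨z, mem_uIcc_subtype.1 hz, rfl⟩, ?_⟩
      ext w
      simp only [Set.mem_setOf_eq, Set.mem_inter_iff, Set.mem_preimage]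
      rw [mem_uIcc_subtype (w := w)]
      tauto
    exact classesOn_finite_coarsen hres (hrEquiv_equivalence o)
      (fun u v huv => IH u v huv) step1
  | limit o ho IH =>
    rw [hrEquiv_limit ho] at h ⊢
    obtain ⟨β, hβ, h⟩ := h
    exact ⟨β, hβ, IH β hβ x y h⟩

/-- For an order-connected suborder, the Hausdorff relation coincides with the ambient one. -/
theorem hrEquiv_subtype_iff {A : Set α} (hA : A.OrdConnected) (o : Ordinal.{v}) (x y : A) :
    hrEquiv o x y ↔ hrEquiv o (x : α) (y : α) := by
  refine ⟨fun h => ?_, hrEquiv_of_val o x y⟩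
  induction o using Ordinal.limitRecOn generalizing x y with
  | zero =>
    rw [hrEquiv_zero] at h ⊢
    rw [h]
  | add_one o IH =>
    rw [hrEquiv_succ] at h ⊢
    refine (h.image (Set.image (Subtype.val : A → α))).subset ?_
    rintro s ⟨z, hz, rfl⟩
    have hzA : z ∈ A := hA.uIcc_subset x.2 y.2 hz
    refine ⟨{w ∈ Set.uIcc x y | hrEquiv o (⟨z, hzA⟩ : A) w},
      ⟨⟨z, hzA⟩, mem_uIcc_subtype.2 hz, rfl⟩, ?_⟩
    ext w
    simp only [Set.mem_image, Set.mem_setOf_eq]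
    constructor
    · rintro ⟨w', ⟨hw', hrw⟩, rfl⟩
      exact ⟨mem_uIcc_subtype.1 hw', IH _ _ hrw⟩
    · rintro ⟨hw, hrw⟩
      have hwA : w ∈ A := hA.uIcc_subset x.2 y.2 hw
      exact ⟨⟨w, hwA⟩, ⟨mem_uIcc_subtype.2 hw, hrEquiv_of_val o _ _ hrw⟩, rfl⟩
  | limit o ho IH =>
    rw [hrEquiv_limit ho] at h ⊢
    obtain ⟨β, hβ, h⟩ := h
    exact ⟨β, hβ, IH β hβ x y h⟩

end Aux10d
section Aux10e

variable {α : Type u} [LinearOrder α]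

theorem hrClasses_eq_classesOn_univ (o : Ordinal.{u}) :
    hrClasses α o = classesOn (hrEquiv o) Set.univ := by
  ext s
  simp [hrClasses, classesOn, Set.sep_univ]

theorem hrClasses_finite_mono {o o' : Ordinal.{u}} (h : o ≤ o')
    (hf : (hrClasses α o).Finite) : (hrClasses α o').Finite := by
  rw [hrClasses_eq_classesOn_univ] at hf ⊢
  exact classesOn_finite_coarsen (hrEquiv_equivalence o) (hrEquiv_equivalence o')
    (fun x y hxy => hrEquiv_mono h hxy) hf

/-- For an order-connected `A`, the classes of the suborder correspond to the
restricted classes of the ambient order. -/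
theorem hrClasses_subtype_eq {A : Set α} (hA : A.OrdConnected) (o : Ordinal.{u}) :
    classesOn (hrEquiv o) A = (Set.image (Subtype.val : A → α)) '' (hrClasses ↥A o) := by
  ext s
  constructor
  · rintro ⟨z, hz, rfl⟩
    refine ⟨{w : A | hrEquiv o (⟨z, hz⟩ : A) w}, ⟨⟨z, hz⟩, rfl⟩, ?_⟩
    ext w
    simp only [Set.mem_image, Set.mem_setOf_eq]
    constructor
    · rintro ⟨w', hw', rfl⟩
      exact ⟨w'.2, (hrEquiv_subtype_iff hA o _ _).1 hw'⟩
    · rintro ⟨hwA, hw⟩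
      exact ⟨⟨w, hwA⟩, (hrEquiv_subtype_iff hA o _ _).2 hw, rfl⟩
  · rintro ⟨s', ⟨z, rfl⟩, rfl⟩
    refine ⟨(z : α), z.2, ?_⟩
    ext w
    simp only [Set.mem_image, Set.mem_setOf_eq]
    constructor
    · rintro ⟨w', hw', rfl⟩
      exact ⟨w'.2, (hrEquiv_subtype_iff hA o _ _).1 hw'⟩
    · rintro ⟨hwA, hw⟩
      exact ⟨⟨w, hwA⟩, (hrEquiv_subtype_iff hA o _ _).2 hw, rfl⟩

theorem hrClasses_subtype_finite_iff {A : Set α} (hA : A.OrdConnected) (o : Ordinal.{u}) :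
    (hrClasses ↥A o).Finite ↔ (classesOn (hrEquiv o) A).Finite := by
  rw [hrClasses_subtype_eq hA o]
  constructor
  · exact fun h => h.image _
  · intro h
    exact Set.Finite.of_finite_image h
      ((Set.image_injective.mpr Subtype.val_injective).injOn)

/-- the general counting lemma for arbitrary suborders -/
theorem hrClasses_subtype_of_finite {A : Set α} (o : Ordinal.{u})
    (h : (hrClasses α o).Finite) :
    (hrClasses ↥A o).Finite ∧ (hrClasses ↥A o).ncard ≤ (hrClasses α o).ncard := by
  classical
  set G : Set α → Set ↥A := fun c =>
    if hc : ∃ z : A, (z : α) ∈ c then {w : A | hrEquiv o hc.choose w} else ∅ with hG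
  have hsub : hrClasses ↥A o ⊆ G '' (hrClasses α o) := by
    rintro s ⟨z, rfl⟩
    refine ⟨{w | hrEquiv o (z : α) w}, ⟨(z : α), rfl⟩, ?_⟩
    have hc : ∃ z' : A, (z' : α) ∈ {w | hrEquiv o (z : α) w} :=
      ⟨z, (hrEquiv_equivalence o).refl _⟩
    rw [hG]
    simp only [dif_pos hc]
    have hzc : hrEquiv o z hc.choose := hrEquiv_of_val o _ _ hc.choose_spec
    ext w
    simp only [Set.mem_setOf_eq]
    exact ⟨fun hw => ((hrEquiv_equivalence o).trans hzc hw : _),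
      fun hw => (hrEquiv_equivalence o).trans ((hrEquiv_equivalence o).symm hzc) hw⟩
  exact ⟨(h.image G).subset hsub,
    le_trans (Set.ncard_le_ncard hsub (h.image G)) (Set.ncard_image_le h)⟩

end Aux10e
section Aux10f

variable {α : Type u} [LinearOrder α]

theorem density_subtype_le (A : Set α) : density ↥A ≤ density α := by
  by_cases hfinα : ∃ o : Ordinal.{u}, (hrClasses α o).Finite
  · have hfinA : ∃ o : Ordinal.{u}, (hrClasses ↥A o).Finite :=
      ⟨hfinα.choose, (hrClasses_subtype_of_finite _ hfinα.choose_spec).1⟩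
    by_cases hA : Nonempty ↥A
    · have hne : Nonempty α := ⟨(Classical.choice hA : A).1⟩
      rw [density, density, dif_pos hfinα, dif_pos hfinA, if_pos hA, if_pos hne]
      set SA := {o : Ordinal.{u} | (hrClasses ↥A o).Finite} with hSA
      set Sα := {o : Ordinal.{u} | (hrClasses α o).Finite} with hSα
      have hsub : Sα ⊆ SA := fun o ho => (hrClasses_subtype_of_finite o ho).1
      have haa : sInf SA ≤ sInf Sα := csInf_le' (hsub (csInf_mem hfinα))
      refine WithBot.coe_le_coe.mpr (WithTop.coe_le_coe.mpr ?_)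
      rcases lt_or_eq_of_le haa with hlt | heq
      · calc Ordinal.omega0 * sInf SA + (((hrClasses ↥A (sInf SA)).ncard - 1 : ℕ) : Ordinal)
            ≤ Ordinal.omega0 * sInf SA + Ordinal.omega0 :=
              add_le_add_right (le_of_lt (Ordinal.nat_lt_omega0 _)) _
          _ = Ordinal.omega0 * (sInf SA + 1) := by
              rw [Ordinal.add_one_eq_succ, Ordinal.mul_succ]
          _ ≤ Ordinal.omega0 * sInf Sα := by
              apply mul_le_mul_right
              rw [Ordinal.add_one_eq_succ, Order.succ_le_iff]
              exact hlt
          _ ≤ _ := le_self_add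
      · rw [heq]
        apply add_le_add_right
        have := (hrClasses_subtype_of_finite (A := A) (sInf Sα) (csInf_mem hfinα)).2
        exact_mod_cast Nat.sub_le_sub_right this 1
    · rw [density, dif_pos hfinA, if_neg hA]
      exact bot_le
  · conv_rhs => rw [density, dif_neg hfinα]
    rw [WithBot.coe_top]
    exact le_top

end Aux10f
section Aux10g

variable {α : Type u} [LinearOrder α]

theorem exists_top_witness (hnofin : ¬∃ o : Ordinal.{u}, (hrClasses α o).Finite) :
    ∃ A : Set α, (∃ m ∈ A, ∀ c ∈ A, c ≤ m) ∧ (∃ m ∈ A, ∀ c ∈ A, m ≤ c) ∧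
      density ↥A = density α := by
  have hpair : ∃ x y : α, ∀ o : Ordinal.{u},
      ¬ (classesOn (hrEquiv o) (Set.uIcc x y)).Finite := by
    by_contra hcon
    push_neg at hcon
    choose f hf using hcon
    set O : Ordinal.{u} := iSup (fun p : α × α => f p.1 p.2 + 1) with hO
    have hall : ∀ x y : α, hrEquiv O x y := by
      intro x y
      refine hrEquiv_mono (Ordinal.le_iSup (fun p : α × α => f p.1 p.2 + 1) (x, y)) ?_
      exact (hrEquiv_succ (f x y) x y).2 (hf x y)
    refine hnofin ⟨O, (Set.finite_singleton Set.univ).subset ?_⟩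
    rintro s ⟨z, rfl⟩
    simp only [Set.mem_singleton_iff]
    ext w
    simp [hall z w]
  obtain ⟨x, y, hxy⟩ := hpair
  refine ⟨Set.uIcc x y, ⟨x ⊔ y, ?_, ?_⟩, ⟨x ⊓ y, ?_, ?_⟩, ?_⟩
  · exact ⟨inf_le_sup, le_rfl⟩
  · intro c hc; exact hc.2
  · exact ⟨le_rfl, inf_le_sup⟩
  · intro c hc; exact hc.1
  · have hnofinA : ¬∃ o : Ordinal.{u}, (hrClasses ↥(Set.uIcc x y) o).Finite := by
      rintro ⟨o, ho⟩
      exact hxy o ((hrClasses_subtype_finite_iff Set.ordConnected_uIcc o).1 ho)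
    rw [density, density, dif_neg hnofinA, dif_neg hnofin]

end Aux10g
section Aux10h

variable {α : Type u} [LinearOrder α]

theorem class_eq_of_mem {o : Ordinal.{u}} {c c' : Set α} (hc : c ∈ hrClasses α o)
    (hc' : c' ∈ hrClasses α o) {v : α} (hv : v ∈ c) (hv' : v ∈ c') : c = c' := by
  obtain ⟨z, rfl⟩ := hc
  obtain ⟨z', rfl⟩ := hc'
  have e := hrEquiv_equivalence (α := α) o
  simp only [Set.mem_setOf_eq] at hv hv'
  ext w
  simp only [Set.mem_setOf_eq]
  exact ⟨fun h => e.trans (e.trans hv' (e.symm hv)) h,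
    fun h => e.trans (e.trans hv (e.symm hv')) h⟩

theorem exists_dense_witness (b : Ordinal.{u}) (n : ℕ) (a : Ordinal.{u})
    (hfa : (hrClasses α a).Finite) (hba : b ≤ a)
    (hcount : ¬ (hrClasses α b).Finite ∨ n + 2 ≤ (hrClasses α b).ncard) :
    ∃ A : Set α, (∃ m ∈ A, ∀ c ∈ A, c ≤ m) ∧ (∃ m ∈ A, ∀ c ∈ A, m ≤ c) ∧
      (((Ordinal.omega0.{u} * b + ((n + 1 : ℕ) : Ordinal.{u}) : Ordinal.{u}) :
          WithTop Ordinal.{u}) : WithBot (WithTop Ordinal.{u})) ≤ density ↥A := by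
  classical
  -- Step 1: a finite set of n+2 pairwise distinct classes
  obtain ⟨t, htsub, htf, htcard⟩ :
      ∃ t : Set (Set α), t ⊆ hrClasses α b ∧ t.Finite ∧ t.ncard = n + 2 := by
    rcases hcount with hinf | hcard
    · have hinf' : (hrClasses α b).Infinite := hinf
      obtain ⟨t, hsub, hcard⟩ := hinf'.exists_subset_card_eq (n + 2)
      exact ⟨↑t, hsub, t.finite_toSet, by rw [Set.ncard_coe_finset]; exact hcard⟩
    · obtain ⟨t, hsub, hcard⟩ := Set.exists_subset_card_eq hcard
      exact ⟨t, hsub, Set.finite_of_ncard_ne_zero (by omega), hcard⟩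
  have htne : t.Nonempty := Set.nonempty_of_ncard_ne_zero (by omega)
  have hαne : Nonempty α := by
    obtain ⟨c, hc⟩ := htne
    obtain ⟨z, rfl⟩ := htsub hc
    exact ⟨z⟩
  -- Step 2: representatives
  set rep : Set α → α := fun c => if h : c.Nonempty then h.choose else Classical.arbitrary α
    with hrep
  have hrepmem : ∀ c ∈ hrClasses α b, rep c ∈ c := by
    rintro c ⟨z, rfl⟩
    have h : Set.Nonempty {w | hrEquiv b z w} := ⟨z, (hrEquiv_equivalence b).refl z⟩
    rw [hrep]
    simp only [dif_pos h]
    exact h.choose_spec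
  have hrepinj : Set.InjOn rep t := by
    intro c hc c' hc' he
    exact class_eq_of_mem (htsub hc) (htsub hc') (hrepmem c (htsub hc))
      (he ▸ hrepmem c' (htsub hc'))
  set s : Set α := rep '' t with hs
  have hsf : s.Finite := htf.image rep
  have hscard : s.ncard = n + 2 := by rw [hs, Set.ncard_image_of_injOn hrepinj, htcard]
  have hpair : ∀ x ∈ s, ∀ y ∈ s, x ≠ y → ¬ hrEquiv b x y := by
    rintro x ⟨c, hc, rfl⟩ y ⟨c', hc', rfl⟩ hxy hR
    have h1 : rep c ∈ c := hrepmem _ (htsub hc)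
    have h2 : rep c' ∈ c' := hrepmem _ (htsub hc')
    have h3 : rep c' ∈ c := by
      obtain ⟨z, rfl⟩ := htsub hc
      exact (hrEquiv_equivalence b).trans h1 hR
    exact hxy (congrArg rep (class_eq_of_mem (htsub hc) (htsub hc') h3 h2))
  -- Step 3: min and max of the representatives
  have hcard2 : 1 < hsf.toFinset.card := by
    rw [Set.ncard_eq_toFinset_card s hsf] at hscard
    omega
  have hfne : hsf.toFinset.Nonempty := Finset.card_pos.mp (by omega)
  set m : α := hsf.toFinset.min' hfne with hm
  set M : α := hsf.toFinset.max' hfne with hM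
  have hmem_m : m ∈ s := by rw [← Set.Finite.mem_toFinset hsf]; exact hsf.toFinset.min'_mem hfne
  have hmem_M : M ∈ s := by rw [← Set.Finite.mem_toFinset hsf]; exact hsf.toFinset.max'_mem hfne
  have hmle : ∀ x ∈ s, m ≤ x := by
    intro x hx; exact hsf.toFinset.min'_le x ((Set.Finite.mem_toFinset hsf).mpr hx)
  have hleM : ∀ x ∈ s, x ≤ M := by
    intro x hx; exact hsf.toFinset.le_max' x ((Set.Finite.mem_toFinset hsf).mpr hx)
  have hmM : m < M := Finset.min'_lt_max'_of_card _ hcard2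
  have hnR : ¬ hrEquiv b m M := hpair m hmem_m M hmem_M (ne_of_lt hmM)
  -- Step 4: the suborder
  set A : Set α := Set.uIcc m M with hA
  have huIcc : A = Set.Icc m M := Set.uIcc_of_le hmM.le
  have hmA : m ∈ A := by rw [huIcc]; exact ⟨le_rfl, hmM.le⟩
  have hMA : M ∈ A := by rw [huIcc]; exact ⟨hmM.le, le_rfl⟩
  have hAcon : A.OrdConnected := Set.ordConnected_uIcc
  have hsA : s ⊆ A := by
    intro x hx; rw [huIcc]; exact ⟨hmle x hx, hleM x hx⟩
  have haSA : (hrClasses ↥A a).Finite := by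
    refine (hrClasses_subtype_finite_iff hAcon a).2
      (classesOn_finite_of_subset (Set.subset_univ A) ?_)
    rw [← hrClasses_eq_classesOn_univ]
    exact hfa
  have hfinA : ∃ o : Ordinal.{u}, (hrClasses ↥A o).Finite := ⟨a, haSA⟩
  have hAne : Nonempty ↥A := ⟨⟨m, hmA⟩⟩
  set SA := {o : Ordinal.{u} | (hrClasses ↥A o).Finite} with hSA
  set aA := sInf SA with haA
  have haAmem : aA ∈ SA := csInf_mem ⟨a, haSA⟩
  have hbaA : b ≤ aA := by
    by_contra hcon
    push_neg at hcon
    have h1 : (classesOn (hrEquiv aA) A).Finite :=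
      (hrClasses_subtype_finite_iff hAcon aA).1 haAmem
    have h2 : hrEquiv (aA + 1) m M := (hrEquiv_succ aA m M).2 h1
    exact hnR (hrEquiv_mono (by rw [Ordinal.add_one_eq_succ, Order.succ_le_iff]; exact hcon) h2)
  refine ⟨A, ⟨M, hMA, ?_⟩, ⟨m, hmA, ?_⟩, ?_⟩
  · intro c hc; rw [huIcc] at hc; exact hc.2
  · intro c hc; rw [huIcc] at hc; exact hc.1
  · rw [density, dif_pos hfinA, if_pos hAne]
    refine WithBot.coe_le_coe.mpr (WithTop.coe_le_coe.mpr ?_)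
    rcases lt_or_eq_of_le hbaA with hlt | heq
    · calc Ordinal.omega0 * b + ((n + 1 : ℕ) : Ordinal)
          ≤ Ordinal.omega0 * b + Ordinal.omega0 :=
            add_le_add_right (le_of_lt (Ordinal.nat_lt_omega0 _)) _
        _ = Ordinal.omega0 * (b + 1) := by
            rw [Ordinal.add_one_eq_succ, Ordinal.mul_succ]
        _ ≤ Ordinal.omega0 * sInf SA := by
            apply mul_le_mul_right
            rw [Ordinal.add_one_eq_succ, Order.succ_le_iff]
            exact hlt
        _ ≤ _ := le_self_add
    · -- b = aA : count classes in the suborder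
      have hcount2 : n + 2 ≤ (hrClasses ↥A b).ncard := by
        set f : α → Set ↥A := fun x =>
          if hx : x ∈ A then {w : ↥A | hrEquiv b (⟨x, hx⟩ : ↥A) w} else ∅ with hf
        have him : f '' s ⊆ hrClasses ↥A b := by
          rintro _ ⟨x, hx, rfl⟩
          rw [hf]
          simp only [dif_pos (hsA hx)]
          exact ⟨⟨x, hsA hx⟩, rfl⟩
        have hinj : Set.InjOn f s := by
          intro x hx y hy he
          by_contra hxy
          have hxA := hsA hx
          have hyA := hsA hy
          rw [hf] at he
          simp only [dif_pos hxA, dif_pos hyA] at he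
          have : (⟨y, hyA⟩ : ↥A) ∈ {w : ↥A | hrEquiv b (⟨x, hxA⟩ : ↥A) w} := by
            rw [he]
            exact (hrEquiv_equivalence b).refl _
          exact hpair x hx y hy hxy
            ((hrEquiv_subtype_iff hAcon b (⟨x, hxA⟩ : ↥A) (⟨y, hyA⟩ : ↥A)).1 this)
        have hfinb : (hrClasses ↥A b).Finite := by rw [heq]; exact haAmem
        calc n + 2 = s.ncard := hscard.symm
          _ = (f '' s).ncard := (Set.ncard_image_of_injOn hinj).symm
          _ ≤ (hrClasses ↥A b).ncard := Set.ncard_le_ncard him hfinb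
      have hfold : sInf {o : Ordinal.{u} | (hrClasses ↥A o).Finite} = b := heq.symm
      rw [hfold]
      apply add_le_add_right
      have : ((n + 1 : ℕ) : Ordinal) ≤ (((hrClasses ↥A b).ncard - 1 : ℕ) : Ordinal) := by
        exact_mod_cast (by omega : n + 1 ≤ (hrClasses ↥A b).ncard - 1)
      exact this

end Aux10h

/-- the density of a linear order is the supremum of the densities of its
suborders possessing a maximum and a minimum. -/
theorem statement10 (α : Type u) [LinearOrder α] :
    density α = sSup {d | ∃ A : Set α,
      (∃ m ∈ A, ∀ a ∈ A, a ≤ m) ∧ (∃ m ∈ A, ∀ a ∈ A, m ≤ a) ∧ d = density ↥A} := by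
  set D := {d | ∃ A : Set α,
      (∃ m ∈ A, ∀ a ∈ A, a ≤ m) ∧ (∃ m ∈ A, ∀ a ∈ A, m ≤ a) ∧ d = density ↥A} with hD
  apply le_antisymm
  · by_cases hfin : ∃ o : Ordinal.{u}, (hrClasses α o).Finite
    · by_cases hne : Nonempty α
      · rw [density, dif_pos hfin, if_pos hne]
        set S := {o : Ordinal.{u} | (hrClasses α o).Finite} with hS
        set a := sInf S with ha
        have hamem : (hrClasses α a).Finite := csInf_mem hfin
        set p : ℕ := (hrClasses α a).ncard - 1 with hp
        by_contra hlt
        push_neg at hlt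
        rcases hsup : sSup D with _ | w
        · -- sSup D = ⊥ : impossible since D has an ordinal-valued element
          obtain ⟨x⟩ := hne
          have hfin0 : ∃ o : Ordinal.{u}, (hrClasses ↥({x} : Set α) o).Finite := by
            refine ⟨0, ?_⟩
            rw [hrClasses_eq_classesOn_univ]
            have : Finite ↥({x} : Set α) := (Set.finite_singleton x).to_subtype
            exact classesOn_finite_of_finite Set.finite_univ
          have hmem : density ↥({x} : Set α) ∈ D :=
            ⟨{x}, ⟨x, rfl, fun c hc => le_of_eq hc⟩, ⟨x, rfl, fun c hc => ge_of_eq hc⟩, rfl⟩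
          have hle : density ↥({x} : Set α) ≤ sSup D := le_sSup hmem
          rw [hsup] at hle
          have hle' : density ↥({x} : Set α) ≤ (⊥ : WithBot (WithTop Ordinal.{u})) := hle
          rw [le_bot_iff, density, dif_pos hfin0,
            if_pos (⟨⟨x, rfl⟩⟩ : Nonempty ↥({x} : Set α))] at hle'
          exact WithBot.coe_ne_bot hle'
        · rcases w with _ | γ
          · -- sSup D = ↑⊤ = ⊤ : contradicts hlt
            rw [hsup] at hlt
            exact not_top_lt (hlt : (⊤ : WithBot (WithTop Ordinal.{u})) < _)
          · -- sSup D = ↑↑γ with γ < ω·a + p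
            rw [hsup] at hlt
            have hγlt : γ < Ordinal.omega0 * a + (p : Ordinal) :=
              WithTop.coe_lt_coe.mp (WithBot.coe_lt_coe.mp hlt)
            set b := γ / Ordinal.omega0.{u} with hb
            obtain ⟨n, hn⟩ := Ordinal.lt_omega0.mp (Ordinal.mod_lt γ Ordinal.omega0_ne_zero)
            have hγ : Ordinal.omega0 * b + (n : Ordinal) = γ := by
              rw [← hn, hb]; exact Ordinal.div_add_mod γ Ordinal.omega0
            have hωb : Ordinal.omega0 * b ≤ γ := by
              rw [← hγ]; exact le_self_add
            have hba : b ≤ a := by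
              by_contra hcon
              push_neg at hcon
              have h1 : Ordinal.omega0 * (a + 1) ≤ Ordinal.omega0 * b :=
                mul_le_mul_right (by rw [Ordinal.add_one_eq_succ, Order.succ_le_iff]; exact hcon) _
              have h2 : γ < Ordinal.omega0 * (a + 1) := by
                calc γ < Ordinal.omega0 * a + (p : Ordinal) := hγlt
                  _ ≤ Ordinal.omega0 * a + Ordinal.omega0 :=
                    add_le_add_right (le_of_lt (Ordinal.nat_lt_omega0 p)) _
                  _ = Ordinal.omega0 * (a + 1) := by
                    rw [Ordinal.add_one_eq_succ, Ordinal.mul_succ]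
              exact absurd (h1.trans hωb) (not_le.mpr h2)
            have hcount : ¬ (hrClasses α b).Finite ∨ n + 2 ≤ (hrClasses α b).ncard := by
              rcases lt_or_eq_of_le hba with hblt | hbeq
              · left
                intro hbfin
                have hbS : b ∈ S := hbfin
                exact absurd (csInf_le' hbS) (not_le.mpr hblt)
              · right
                have hnp : (n : Ordinal) < (p : Ordinal) := by
                  have := hγlt
                  rw [← hγ, hbeq] at this
                  exact lt_of_add_lt_add_left this
                have hnp' : n < p := by exact_mod_cast hnp
                have hpos : 0 < (hrClasses α a).ncard := by
                  rw [Set.ncard_pos hamem]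
                  obtain ⟨x⟩ := hne
                  exact ⟨{w | hrEquiv a x w}, x, rfl⟩
                rw [hbeq]
                omega
            obtain ⟨A, hmax, hmin, hdens⟩ := exists_dense_witness b n a hamem hba hcount
            have hle : density ↥A ≤ sSup D := le_sSup ⟨A, hmax, hmin, rfl⟩
            rw [hsup] at hle
            have h2 := hdens.trans hle
            have h3 : γ < Ordinal.omega0 * b + ((n + 1 : ℕ) : Ordinal) := by
              rw [← hγ]
              exact add_lt_add_right (by exact_mod_cast Nat.lt_succ_self n) _
            exact absurd (WithTop.coe_le_coe.mp (WithBot.coe_le_coe.mp h2)) (not_le.mpr h3)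
      · -- α is empty
        rw [density, dif_pos hfin, if_neg hne]
        exact bot_le
    · -- no ordinal gives finitely many classes
      obtain ⟨A, hmax, hmin, hd⟩ := exists_top_witness hfin
      rw [← hd]
      exact le_sSup ⟨A, hmax, hmin, rfl⟩
  · apply sSup_le
    rintro d ⟨A, _, _, rfl⟩
    exact density_subtype_le A

end PaperHam

end
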